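/- A graph is a partial k-tree if and only if it has treewidth at most k. -/

import Mathlib

open SimpleGraph

/-- A finite-style graph: a subgraph of the complete graph on `ℕ`,
i.e. a graph together with its vertex set `verts ⊆ ℕ`. -/
abbrev FGraph := SimpleGraph.Subgraph (⊤ : SimpleGraph ℕ)

/-- The complete graph on the vertex set `s`. -/
def cliqueGraph (s : Finset ℕ) : FGraph where
  verts := ↑s
  Adj u v := u ∈ s ∧ v ∈ s ∧ u ≠ v
  adj_sub h := h.2.2
  edge_vert h := h.1
  symm := ⟨by intro u v h; exact ⟨h.2.1, h.1, h.2.2.symm⟩⟩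

/-- Add a new vertex `v` to `G`, joined to the vertices of `s` (which are in `G`). -/
def addVertex (G : FGraph) (v : ℕ) (s : Finset ℕ) : FGraph where
  verts := insert v G.verts
  Adj x y := G.Adj x y ∨ (x = v ∧ y ≠ v ∧ y ∈ s ∧ y ∈ G.verts)
    ∨ (y = v ∧ x ≠ v ∧ x ∈ s ∧ x ∈ G.verts)
  adj_sub h := by
    rcases h with h | h | h
    · exact G.adj_sub h
    · exact fun e => h.2.1 (by rw [← e, h.1])
    · exact fun e => h.2.1 (by rw [e, h.1])
  edge_vert h := by
    rcases h with h | h | h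
    · exact Set.mem_insert_of_mem _ (G.edge_vert h)
    · exact h.1 ▸ Set.mem_insert _ _
    · exact Set.mem_insert_of_mem _ h.2.2.2
  symm := ⟨by
    intro x y h
    rcases h with h | h | h
    · exact Or.inl (G.adj_symm h)
    · exact Or.inr (Or.inr h)
    · exact Or.inr (Or.inl h)⟩

/-- `s` is a clique (of pairwise adjacent vertices) in `G`. -/
def IsCliqueIn (G : FGraph) (s : Finset ℕ) : Prop :=
  ↑s ⊆ G.verts ∧ ∀ u ∈ s, ∀ v ∈ s, u ≠ v → G.Adj u v

/-- `k`-trees: start from a `k`-clique and repeatedly add a vertex joined to an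
existing `k`-clique. -/
inductive IsKTree (k : ℕ) : FGraph → Prop
  | base (s : Finset ℕ) (hs : s.card = k) : IsKTree k (cliqueGraph s)
  | grow (G : FGraph) (hG : IsKTree k G) (s : Finset ℕ) (hs : s.card = k)
      (hclique : IsCliqueIn G s) (v : ℕ) (hv : v ∉ G.verts) :
      IsKTree k (addVertex G v s)

/-- A partial `k`-tree is a subgraph of a `k`-tree. -/
def IsPartialKTree (k : ℕ) (G : FGraph) : Prop := ∃ H : FGraph, IsKTree k H ∧ G ≤ H

/-- Add the single edge `uv` (and its endpoints) to `G`. -/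
def addEdge (G : FGraph) (u v : ℕ) : FGraph where
  verts := insert u (insert v G.verts)
  Adj x y := G.Adj x y ∨ (x = u ∧ y = v ∧ u ≠ v) ∨ (x = v ∧ y = u ∧ u ≠ v)
  adj_sub h := by
    rcases h with h | h | h
    · exact G.adj_sub h
    · exact fun e => h.2.2 (by rw [← h.1, ← h.2.1, e])
    · exact fun e => h.2.2 (by rw [← h.1, ← h.2.1, e])
  edge_vert h := by
    rcases h with h | h | h
    · exact Set.mem_insert_of_mem _ (Set.mem_insert_of_mem _ (G.edge_vert h))
    · exact h.1 ▸ Set.mem_insert _ _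
    · exact h.1 ▸ Set.mem_insert_of_mem _ (Set.mem_insert _ _)
  symm := ⟨by
    intro x y h
    rcases h with h | h | h
    · exact Or.inl (G.adj_symm h)
    · exact Or.inr (Or.inr ⟨h.2.1, h.1, h.2.2⟩)
    · exact Or.inr (Or.inl ⟨h.2.1, h.1, h.2.2⟩)⟩

/-- `G` is a minor of `H`: there are pairwise disjoint nonempty connected branch sets
in `H`, one for each vertex of `G`, with an `H`-edge between the branch sets of any
two `G`-adjacent vertices. -/
def IsMinor (G H : FGraph) : Prop :=
  ∃ β : ℕ → Finset ℕ,
    (∀ u ∈ G.verts, (β u).Nonempty ∧ ↑(β u) ⊆ H.verts ∧ (H.induce ↑(β u)).coe.Connected) ∧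
    (∀ u ∈ G.verts, ∀ v ∈ G.verts, u ≠ v → Disjoint (β u) (β v)) ∧
    (∀ u v, G.Adj u v → ∃ x ∈ β u, ∃ y ∈ β v, H.Adj x y)

/-- The complete graph `K₅`. -/
def K5g : FGraph := cliqueGraph {0, 1, 2, 3, 4}

/-- The complete bipartite graph `K₃,₃` with parts `{0,1,2}` and `{3,4,5}`. -/
def K33g : FGraph where
  verts := {n : ℕ | n < 6}
  Adj u v := (u < 3 ∧ 3 ≤ v ∧ v < 6) ∨ (v < 3 ∧ 3 ≤ u ∧ u < 6)
  adj_sub := fun {u v} h => by rcases h with h | h <;> exact show u ≠ v by omega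
  edge_vert := fun {u v} h => by rcases h with h | h <;> exact show u < 6 by omega
  symm := ⟨by intro u v h; tauto⟩

/-- Planarity via Wagner's theorem: no `K₅` and no `K₃,₃` minor. -/
def Planar (G : FGraph) : Prop := ¬ IsMinor K5g G ∧ ¬ IsMinor K33g G

/-- In a maximal planar graph (planar triangulation), the triangle `abc` bounds a face:
combinatorially, a new vertex can be placed inside it and joined to `a`, `b`, `c`
while preserving planarity. -/
def IsFaceTriangle (G : FGraph) (a b c : ℕ) : Prop :=
  G.Adj a b ∧ G.Adj b c ∧ G.Adj a c ∧
  ∀ v, v ∉ G.verts → Planar (addVertex G v {a, b, c})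

/-- A perfect elimination scheme witnessing that `H` is a `k`-tree: a listing of the
vertices of `H` whose first `k` entries form a clique and each later entry has exactly
`k` earlier neighbours, which form a clique. -/
def IsPESk (k : ℕ) (l : List ℕ) (H : FGraph) : Prop :=
  l.Nodup ∧ H.verts = {v | v ∈ l} ∧ k ≤ l.length ∧
  (∀ i j : Fin l.length, (i : ℕ) < k → (j : ℕ) < k → i ≠ j → H.Adj (l.get i) (l.get j)) ∧
  (∀ i : Fin l.length, k ≤ (i : ℕ) →
    ∃ s : Finset (Fin l.length), s.card = k ∧ (∀ j ∈ s, (j : ℕ) < (i : ℕ)) ∧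
      (∀ a ∈ s, ∀ b ∈ s, a ≠ b → H.Adj (l.get a) (l.get b)) ∧
      (∀ j : Fin l.length, (j : ℕ) < (i : ℕ) → (H.Adj (l.get j) (l.get i) ↔ j ∈ s)))

/-- A vertex is simplicial if its neighbourhood induces a clique. -/
def IsSimplicial (G : FGraph) (v : ℕ) : Prop :=
  v ∈ G.verts ∧ ∀ u w, G.Adj v u → G.Adj v w → u ≠ w → G.Adj u w

/-- A graph is chordal if it has no induced cycle of length greater than 3. -/
def IsChordal (G : FGraph) : Prop :=
  ∀ n : ℕ, 4 ≤ n → ¬ ∃ f : Fin n → ℕ, Function.Injective f ∧ (∀ i, f i ∈ G.verts) ∧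
    ∀ i j : Fin n, G.Adj (f i) (f j) ↔ ((i : ℕ) + 1) % n = (j : ℕ) ∨ ((j : ℕ) + 1) % n = (i : ℕ)

/-- A (general) perfect elimination scheme: an ordering of the vertices such that each
vertex is simplicial in the subgraph induced by it and the earlier vertices. -/
def IsPES (l : List ℕ) (G : FGraph) : Prop :=
  l.Nodup ∧ G.verts = {v | v ∈ l} ∧
  ∀ i : Fin l.length, IsSimplicial (G.induce {v | v ∈ l.take ((i : ℕ) + 1)}) (l.get i)

/-- `G` can be reduced to the empty graph by repeatedly deleting simplicial vertices. -/
inductive Reducible : FGraph → Prop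
  | empty (G : FGraph) (h : G.verts = ∅) : Reducible G
  | delete (G : FGraph) (v : ℕ) (hv : IsSimplicial G v)
      (h : Reducible (G.deleteVerts {v})) : Reducible G

/-- `G` is 3-connected: at least 4 vertices, and deleting any two vertices leaves it
connected. -/
def ThreeConnected (G : FGraph) : Prop :=
  4 ≤ G.verts.ncard ∧ ∀ S : Finset ℕ, S.card ≤ 2 → (G.deleteVerts ↑S).Connected

/-- `G` has a tree decomposition of width at most `k`. -/
def HasTreewidthLE (G : FGraph) (k : ℕ) : Prop :=
  ∃ (ι : Type) (T : SimpleGraph ι) (B : ι → Finset ℕ),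
    T.Connected ∧ T.IsAcyclic ∧
    (∀ v ∈ G.verts, ∃ i, v ∈ B i) ∧
    (∀ u v, G.Adj u v → ∃ i, u ∈ B i ∧ v ∈ B i) ∧
    (∀ v ∈ G.verts, (SimpleGraph.induce {i | v ∈ B i} T).Connected) ∧
    (∀ i, (B i).card ≤ k + 1)

/-- `G` is acyclic (a forest). -/
def AcyclicFG (G : FGraph) : Prop := G.coe.IsAcyclic

/-- `G` is a complete graph on its vertex set. -/
def CompleteFG (G : FGraph) : Prop := ∀ u ∈ G.verts, ∀ v ∈ G.verts, u ≠ v → G.Adj u v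

/-- The path on the three vertices `0, 1, 2`. -/
def P3 : FGraph := addEdge (addEdge (cliqueGraph ∅) 0 1) 1 2

/-!
A `k`-tree has a tree decomposition of width `k` in which every clique lies in some bag: when a
vertex `v` is attached to a `k`-clique `s`, a new leaf bag `insert v s` is hung off a bag
containing `s`. Conversely, restrict a decomposition of `G` to a finite subtree and induct. If some
vertex `v` lies in a single bag, delete it, build a `k`-tree for the rest, and re-attach `v` to a
`k`-clique containing the rest of its bag (in a `k`-tree every clique of size at most `k` extends
to a `k`-clique). Otherwise the bag of a leaf of the tree is contained in the bag of its neighbour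
and the leaf can be dropped. When every bag is empty, a `k`-clique on fresh vertices finishes.
-/

namespace SimpleGraph

variable {V W : Type*} {G : SimpleGraph V}

theorem preconnected_induce_iff_exists_walk {s : Set V} :
    (G.induce s).Preconnected ↔
      ∀ u ∈ s, ∀ v ∈ s, ∃ p : G.Walk u v, ∀ w ∈ p.support, w ∈ s := by
  constructor
  · intro h u hu v hv
    obtain ⟨p⟩ := h ⟨u, hu⟩ ⟨v, hv⟩
    refine ⟨p.map (Embedding.induce s).toHom, fun w hw => ?_⟩
    obtain ⟨w', -, rfl⟩ := List.mem_map.1 ((Walk.support_map _ _) ▸ hw)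
    exact w'.2
  · rintro h ⟨u, hu⟩ ⟨v, hv⟩
    obtain ⟨p, hp⟩ := h u hu v hv
    exact ⟨p.induce s hp⟩

theorem IsAcyclic.exists_walk_support_subset [DecidableEq V] (hG : G.IsAcyclic) {u v : V}
    (p q : G.Walk u v) :
    ∃ r : G.Walk u v, r.support ⊆ p.support ∧ r.support ⊆ q.support := by
  have : p.bypass = q.bypass := congrArg Subtype.val <|
    (hG.subsingleton_path u v).elim ⟨_, p.bypass_isPath⟩ ⟨_, q.bypass_isPath⟩
  exact ⟨p.bypass, p.support_bypass_subset_support, this ▸ q.support_bypass_subset_support⟩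

theorem IsTree.sum_sup_edge [Finite V] [Finite W] {H : SimpleGraph W} (hG : G.IsTree)
    (hH : H.IsTree) (v : V) (w : W) : ((G ⊕g H) ⊔ edge (Sum.inl v) (Sum.inr w)).IsTree := by
  rw [isTree_iff_connected_and_card] at hG hH ⊢
  refine ⟨hG.1.sum_sup_edge hH.1, ?_⟩
  have hnew : s(Sum.inl v, Sum.inr w) ∉ (G ⊕g H).edgeSet :=
    not_adj_sum_inl_inr (G := G) (H := H) v w
  rw [edgeSet_sup, edgeSet_edge_of_ne Sum.inl_ne_inr, Set.union_singleton,
    Nat.card_coe_set_eq, Set.ncard_insert_of_notMem hnew (Set.toFinite _),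
    ← Nat.card_coe_set_eq, Nat.card_congr edgeSetSumEquiv, Nat.card_sum, Nat.card_sum]
  omega

theorem IsTree.exists_leaf [Finite V] [Nontrivial V] (hG : G.IsTree) :
    ∃ l i, G.Adj l i ∧ (∀ j, G.Adj l j → j = i) ∧ (G.induce {l}ᶜ).Connected := by
  classical
  have := Fintype.ofFinite V
  obtain ⟨l, hl⟩ := hG.exists_vert_degree_one_of_nontrivial
  obtain ⟨i, hi, hunique⟩ := degree_eq_one_iff_existsUnique_adj.1 hl
  exact ⟨l, i, hi, hunique, hG.connected.induce_compl_singleton_of_degree_eq_one hl⟩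

end SimpleGraph

section Cliques

variable {G H : FGraph} {s t : Finset ℕ} {v : ℕ}

theorem IsCliqueIn.subset (h : IsCliqueIn G s) (hts : t ⊆ s) : IsCliqueIn G t :=
  ⟨(Finset.coe_subset.2 hts).trans h.1, fun a ha b hb => h.2 a (hts ha) b (hts hb)⟩

theorem IsCliqueIn.mono (h : IsCliqueIn G s) (hGH : G ≤ H) : IsCliqueIn H s :=
  ⟨h.1.trans hGH.1, fun a ha b hb hab => hGH.2 (h.2 a ha b hb hab)⟩

theorem isCliqueIn_cliqueGraph (s : Finset ℕ) : IsCliqueIn (cliqueGraph s) s :=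
  ⟨subset_rfl, fun _ ha _ hb hab => ⟨ha, hb, hab⟩⟩

theorem le_addVertex (G : FGraph) (v : ℕ) (s : Finset ℕ) : G ≤ addVertex G v s :=
  ⟨Set.subset_insert _ _, fun _ _ => Or.inl⟩

theorem IsCliqueIn.insert_addVertex (h : IsCliqueIn G s) (v : ℕ) :
    IsCliqueIn (addVertex G v s) (insert v s) := by
  refine ⟨?_, fun a ha b hb hab => ?_⟩
  · rw [Finset.coe_insert]
    exact Set.insert_subset_insert h.1
  rcases Finset.mem_insert.1 ha with rfl | has <;> rcases Finset.mem_insert.1 hb with rfl | hbs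
  · exact absurd rfl hab
  · exact Or.inr (Or.inl ⟨rfl, hab.symm, hbs, h.1 hbs⟩)
  · exact Or.inr (Or.inr ⟨rfl, hab, has, h.1 has⟩)
  · exact Or.inl (h.2 a has b hbs hab)

theorem IsCliqueIn.of_addVertex (h : IsCliqueIn (addVertex G v s) t) (hvt : v ∉ t) :
    IsCliqueIn G t := by
  refine ⟨fun a ha => (h.1 ha).resolve_left (ne_of_mem_of_not_mem ha hvt),
    fun a ha b hb hab => ?_⟩
  rcases h.2 a ha b hb hab with h' | ⟨rfl, -⟩ | ⟨rfl, -⟩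
  · exact h'
  · exact absurd ha hvt
  · exact absurd hb hvt

theorem IsCliqueIn.subset_insert_of_addVertex (h : IsCliqueIn (addVertex G v s) t)
    (hv : v ∉ G.verts) (hvt : v ∈ t) : t ⊆ insert v s := by
  intro a ha
  rcases eq_or_ne a v with rfl | hav
  · exact Finset.mem_insert_self _ _
  rcases h.2 a ha v hvt hav with h' | ⟨rfl, -⟩ | ⟨-, -, has, -⟩
  · exact absurd (G.edge_vert h'.symm) hv
  · exact absurd rfl hav
  · exact Finset.mem_insert_of_mem has

theorem IsKTree.exists_isCliqueIn_superset {k : ℕ} (hH : IsKTree k H) (ht : IsCliqueIn H t)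
    (htk : t.card ≤ k) : ∃ s, IsCliqueIn H s ∧ s.card = k ∧ t ⊆ s := by
  induction hH generalizing t with
  | base s hs => exact ⟨s, isCliqueIn_cliqueGraph s, hs, Finset.coe_subset.1 ht.1⟩
  | grow G _ s hs hclique v hv ih =>
    by_cases hvt : v ∈ t
    · have hvs : v ∉ s := fun h => hv (hclique.1 h)
      obtain ⟨u, htu, hus, hu⟩ := Finset.exists_subsuperset_card_eq
        (ht.subset_insert_of_addVertex hv hvt) htk (by simp [hvs, hs])
      exact ⟨u, (hclique.insert_addVertex v).subset hus, hu, htu⟩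
    · obtain ⟨u, hu, hcard, htu⟩ := ih (ht.of_addVertex hvt) htk
      exact ⟨u, hu.mono (le_addVertex G v s), hcard, htu⟩

end Cliques

/-- The bags containing a given vertex span a subtree, expressed through walks. -/
structure TreeDecomposition (ι : Type) where
  tree : SimpleGraph ι
  bag : ι → Finset ℕ
  isTree : tree.IsTree
  exists_walk_mem_bag : ∀ v, ∀ i, v ∈ bag i → ∀ j, v ∈ bag j →
    ∃ p : tree.Walk i j, ∀ l ∈ p.support, v ∈ bag l

namespace TreeDecomposition

variable {ι : Type} {G H : FGraph} {k : ℕ}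

def Covers (D : TreeDecomposition ι) (G : FGraph) : Prop :=
  (∀ v ∈ G.verts, ∃ i, v ∈ D.bag i) ∧
    ∀ u v, G.Adj u v → ∃ i, u ∈ D.bag i ∧ v ∈ D.bag i

def single (b : Finset ℕ) : TreeDecomposition Unit where
  tree := ⊥
  bag _ := b
  isTree := .of_subsingleton
  exists_walk_mem_bag _ _ hv _ _ := ⟨.nil, fun _ _ => hv⟩

def attachBag [Finite ι] (D : TreeDecomposition ι) (i₀ : ι) (b : Finset ℕ)
    (hb : ∀ v ∈ b, ∀ i, v ∈ D.bag i → v ∈ D.bag i₀) :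
    TreeDecomposition (ι ⊕ Unit) where
  tree := (D.tree ⊕g ⊥) ⊔ edge (Sum.inl i₀) (Sum.inr ())
  bag := Sum.elim D.bag fun _ => b
  isTree := D.isTree.sum_sup_edge .of_subsingleton i₀ ()
  exists_walk_mem_bag := by
    let T := (D.tree ⊕g ⊥) ⊔ edge (Sum.inl i₀) (Sum.inr ())
    let B : ι ⊕ Unit → Finset ℕ := Sum.elim D.bag fun _ => b
    have lift : ∀ v i, v ∈ D.bag i → ∀ j, v ∈ D.bag j →
        ∃ p : T.Walk (.inl i) (.inl j), ∀ l ∈ p.support, v ∈ B l := by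
      intro v i hi j hj
      obtain ⟨p, hp⟩ := D.exists_walk_mem_bag v i hi j hj
      let f : D.tree →g T := (Hom.ofLE le_sup_left).comp Embedding.sumInl.toHom
      have hpf : ∀ l ∈ (p.map f).support, v ∈ B l := by
        intro l hl
        rw [Walk.support_map] at hl
        obtain ⟨a, ha, rfl⟩ := List.mem_map.1 hl
        exact hp a ha
      exact ⟨_, hpf⟩
    have toNew : ∀ v i, v ∈ D.bag i → v ∈ b →
        ∃ p : T.Walk (.inl i) (.inr ()), ∀ l ∈ p.support, v ∈ B l := by
      intro v i hi hvb
      obtain ⟨p, hp⟩ := lift v i hi i₀ (hb v hvb i hi)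
      refine ⟨p.concat (by simp [T, edge_adj]), fun l hl => ?_⟩
      rw [Walk.support_concat, List.mem_append, List.mem_singleton] at hl
      rcases hl with hl | rfl
      · exact hp l hl
      · exact hvb
    rintro v (i | ⟨⟩) hi (j | ⟨⟩) hj
    · exact lift v i hi j hj
    · exact toNew v i hi hj
    · obtain ⟨p, hp⟩ := toNew v j hj hi
      exact ⟨p.reverse, fun l hl => hp l (by simpa using hl)⟩
    · exact ⟨.nil, fun l hl => by simp_all⟩

def restrict (D : TreeDecomposition ι) (S : Set ι) (hS : (D.tree.induce S).Connected) :
    TreeDecomposition S where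
  tree := D.tree.induce S
  bag i := D.bag i
  isTree := ⟨hS, D.isTree.isAcyclic.induce S⟩
  exists_walk_mem_bag v i hi j hj := by
    classical
    obtain ⟨p, hp⟩ := D.exists_walk_mem_bag v i hi j hj
    obtain ⟨q, hq⟩ := preconnected_induce_iff_exists_walk.1 hS.preconnected i i.2 j j.2
    obtain ⟨r, hrp, hrq⟩ := D.isTree.isAcyclic.exists_walk_support_subset p q
    refine ⟨r.induce S fun l hl => hq l (hrq hl), fun l hl => hp l (hrp ?_)⟩
    rwa [Walk.support_induce, List.mem_attachWith] at hl

def eraseVertex (D : TreeDecomposition ι) (v : ℕ) : TreeDecomposition ι where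
  tree := D.tree
  bag i := (D.bag i).erase v
  isTree := D.isTree
  exists_walk_mem_bag x i hi j hj := by
    obtain ⟨p, hp⟩ := D.exists_walk_mem_bag x i (Finset.mem_of_mem_erase hi) j
      (Finset.mem_of_mem_erase hj)
    exact ⟨p, fun l hl => Finset.mem_erase.2 ⟨Finset.ne_of_mem_erase hi, hp l hl⟩⟩

variable {D : TreeDecomposition ι}

theorem mem_bag_of_leaf {l i₀ j : ι} (hleaf : ∀ i, D.tree.Adj l i → i = i₀) {v : ℕ}
    (hl : v ∈ D.bag l) (hj : v ∈ D.bag j) (hjl : j ≠ l) : v ∈ D.bag i₀ := by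
  obtain ⟨p, hp⟩ := D.exists_walk_mem_bag v l hl j hj
  have hp_nil : ¬p.Nil := fun h => hjl h.eq.symm
  rw [← hleaf _ (p.adj_snd hp_nil)]
  exact hp _ (p.getVert_mem_support 1)

theorem Covers.mono (hD : D.Covers H) (hGH : G ≤ H) : D.Covers G :=
  ⟨fun v hv => hD.1 v (hGH.1 hv), fun u v huv => hD.2 u v (hGH.2 huv)⟩

theorem Covers.le_of_isCliqueIn (hD : D.Covers G) (hH : ∀ i, IsCliqueIn H (D.bag i)) :
    G ≤ H := by
  refine ⟨fun v hv => ?_, fun u v huv => ?_⟩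
  · obtain ⟨i, hi⟩ := hD.1 v hv
    exact (hH i).1 hi
  · obtain ⟨i, hu, hv⟩ := hD.2 u v huv
    exact (hH i).2 u hu v hv (G.adj_sub huv)

theorem Covers.hasTreewidthLE (hD : D.Covers G) (hw : ∀ i, (D.bag i).card ≤ k + 1) :
    HasTreewidthLE G k := by
  refine ⟨ι, D.tree, D.bag, D.isTree.connected, D.isTree.isAcyclic, hD.1, hD.2,
    fun v hv => (connected_iff _).2 ⟨?_, ?_⟩, hw⟩
  · exact preconnected_induce_iff_exists_walk.2 (D.exists_walk_mem_bag v)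
  · obtain ⟨i, hi⟩ := hD.1 v hv
    exact ⟨⟨i, hi⟩⟩

theorem Covers.exists_finset_restrict (hD : D.Covers G) (hfin : G.verts.Finite) :
    ∃ (S : Finset ι) (hS : (D.tree.induce ↑S).Connected), (D.restrict ↑S hS).Covers G := by
  classical
  obtain ⟨i₀⟩ := D.isTree.connected.nonempty
  have hpick : ∀ u v, ∃ i,
      (∃ j, u ∈ D.bag j ∧ v ∈ D.bag j) → u ∈ D.bag i ∧ v ∈ D.bag i := fun u v =>
    (em _).elim (fun ⟨j, hj⟩ => ⟨j, fun _ => hj⟩) fun h => ⟨i₀, fun h' => absurd h' h⟩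
  choose pick hpick using hpick
  set F := hfin.toFinset
  obtain ⟨S, hpickS, hS⟩ := extend_finset_to_connected D.isTree.connected.preconnected
    (Finset.insert_nonempty i₀ ((F ×ˢ F).image fun p => pick p.1 p.2))
  have hmem : ∀ u ∈ G.verts, ∀ v ∈ G.verts, pick u v ∈ S := fun u hu v hv =>
    hpickS (Finset.mem_insert_of_mem (Finset.mem_image.2 ⟨(u, v), by simp [F, hu, hv], rfl⟩))
  refine ⟨S, hS, fun v hv => ?_, fun u v huv => ?_⟩
  · obtain ⟨i, hi⟩ := hD.1 v hv
    exact ⟨⟨_, hmem v hv v hv⟩, (hpick v v ⟨i, hi, hi⟩).1⟩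
  · exact ⟨⟨_, hmem u (G.edge_vert huv) v (G.edge_vert huv.symm)⟩,
      hpick u v (hD.2 u v huv)⟩

end TreeDecomposition

theorem HasTreewidthLE.exists_treeDecomposition {G : FGraph} {k : ℕ} (h : HasTreewidthLE G k) :
    ∃ (ι : Type) (D : TreeDecomposition ι),
      D.Covers G ∧ (∀ i, (D.bag i).card ≤ k + 1) ∧ ∀ i, ↑(D.bag i) ⊆ G.verts := by
  classical
  obtain ⟨ι, T, B, hconn, hacyc, hcov, hedge, hbag, hw⟩ := h
  refine ⟨ι, ⟨T, fun i => (B i).filter (· ∈ G.verts), ⟨hconn, hacyc⟩, ?_⟩,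
    ⟨?_, ?_⟩, ?_, ?_⟩
  · intro v i hi j hj
    simp only [Finset.mem_filter] at hi hj ⊢
    obtain ⟨p, hp⟩ := preconnected_induce_iff_exists_walk.1 (hbag v hi.2).preconnected
      i hi.1 j hj.1
    exact ⟨p, fun l hl => ⟨hp l hl, hi.2⟩⟩
  · intro v hv
    obtain ⟨i, hi⟩ := hcov v hv
    exact ⟨i, Finset.mem_filter.2 ⟨hi, hv⟩⟩
  · intro u v huv
    obtain ⟨i, hu, hv⟩ := hedge u v huv
    exact ⟨i, Finset.mem_filter.2 ⟨hu, G.edge_vert huv⟩,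
      Finset.mem_filter.2 ⟨hv, G.edge_vert huv.symm⟩⟩
  · exact fun i => (Finset.card_filter_le _ _).trans (hw i)
  · exact fun i v hv => (Finset.mem_filter.1 hv).2

theorem IsKTree.exists_treeDecomposition {H : FGraph} {k : ℕ} (hH : IsKTree k H) :
    ∃ (ι : Type) (_ : Finite ι) (D : TreeDecomposition ι), D.Covers H ∧
      (∀ i, (D.bag i).card ≤ k + 1) ∧ (∀ i, ↑(D.bag i) ⊆ H.verts) ∧
      ∀ t, IsCliqueIn H t → ∃ i, t ⊆ D.bag i := by
  induction hH with
  | base s hs =>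
    refine ⟨Unit, inferInstance, .single s,
      ⟨fun v hv => ⟨(), hv⟩, fun u v huv => ⟨(), huv.1, huv.2.1⟩⟩,
      fun _ => by simp [TreeDecomposition.single, hs], fun _ => subset_rfl,
      fun t ht => ⟨(), Finset.coe_subset.1 ht.1⟩⟩
  | grow G _ s hs hclique v hv ih =>
    obtain ⟨ι, _, D, hcov, hw, hverts, hcliques⟩ := ih
    obtain ⟨i₀, hi₀⟩ := hcliques s hclique
    have hb : ∀ x ∈ insert v s, ∀ i, x ∈ D.bag i → x ∈ D.bag i₀ := by
      intro x hx i hxi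
      rcases Finset.mem_insert.1 hx with rfl | hxs
      · exact absurd (hverts i hxi) hv
      · exact hi₀ hxs
    refine ⟨ι ⊕ Unit, inferInstance, D.attachBag i₀ (insert v s) hb,
      ⟨?_, ?_⟩, ?_, ?_, ?_⟩
    · rintro x (rfl | hx)
      · exact ⟨.inr (), Finset.mem_insert_self _ _⟩
      · obtain ⟨i, hi⟩ := hcov.1 x hx
        exact ⟨.inl i, hi⟩
    · rintro x y (hxy | ⟨rfl, -, hys, -⟩ | ⟨rfl, -, hxs, -⟩)
      · obtain ⟨i, hi⟩ := hcov.2 x y hxy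
        exact ⟨.inl i, hi⟩
      · exact ⟨.inr (), Finset.mem_insert_self _ _, Finset.mem_insert_of_mem hys⟩
      · exact ⟨.inr (), Finset.mem_insert_of_mem hxs, Finset.mem_insert_self _ _⟩
    · rintro (i | ⟨⟩)
      · exact hw i
      · exact (Finset.card_insert_le v s).trans (by rw [hs])
    · rintro (i | ⟨⟩)
      · exact (hverts i).trans (Set.subset_insert v G.verts)
      · show ↑(insert v s) ⊆ insert v G.verts
        rw [Finset.coe_insert]
        exact Set.insert_subset_insert hclique.1
    · intro t ht
      by_cases hvt : v ∈ t
      · exact ⟨.inr (), ht.subset_insert_of_addVertex hv hvt⟩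
      · obtain ⟨i, hi⟩ := hcliques t (ht.of_addVertex hvt)
        exact ⟨.inl i, hi⟩

/-- The vertices `≥ N` lying in no `B i` form the reserve of fresh vertices: the completion may
use them freely, but any other vertex it uses comes from some `B i`. -/
def HasKTreeCompletion (k N : ℕ) {ι : Type} (B : ι → Finset ℕ) : Prop :=
  ∃ H : FGraph, IsKTree k H ∧ (∀ i, IsCliqueIn H (B i)) ∧
    ∀ x ∈ H.verts, x < N → ∃ i, x ∈ B i

section HasKTreeCompletion

variable {k N : ℕ} {ι : Type} {B : ι → Finset ℕ}

theorem hasKTreeCompletion_of_forall_eq_empty (hB : ∀ i, B i = ∅) :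
    HasKTreeCompletion k N B := by
  refine ⟨cliqueGraph ((Finset.range k).map (addLeftEmbedding N)), IsKTree.base _ (by simp),
    fun i => ?_, fun x hx hxN => ?_⟩
  · rw [hB i]
    exact ⟨by simp, by simp⟩
  · obtain ⟨a, -, rfl⟩ := Finset.mem_map.1 hx
    simp at hxN

theorem HasKTreeCompletion.of_erase {v : ℕ} {l : ι}
    (h : HasKTreeCompletion k N fun i => (B i).erase v) (hvl : v ∈ B l)
    (hv : ∀ i, v ∈ B i → i = l) (hl : (B l).card ≤ k + 1) (hvN : v < N) :
    HasKTreeCompletion k N B := by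
  obtain ⟨H, hH, hcliques, hfresh⟩ := h
  have hvH : v ∉ H.verts := fun hvH => by
    obtain ⟨i, hi⟩ := hfresh v hvH hvN
    simp at hi
  obtain ⟨s, hs, hsk, hls⟩ := hH.exists_isCliqueIn_superset (hcliques l)
    (by rw [Finset.card_erase_of_mem hvl]; omega)
  refine ⟨addVertex H v s, hH.grow H s hsk hs v hvH, fun i => ?_, fun x hx hxN => ?_⟩
  · by_cases hi : i = l
    · subst hi
      exact (hs.insert_addVertex v).subset
        ((Finset.insert_erase_subset v (B i)).trans (Finset.insert_subset_insert v hls))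
    · rw [← Finset.erase_eq_of_notMem fun h => hi (hv i h)]
      exact (hcliques i).mono (le_addVertex H v s)
  · rcases hx with rfl | hx
    · exact ⟨l, hvl⟩
    · obtain ⟨i, hi⟩ := hfresh x hx hxN
      exact ⟨i, Finset.mem_of_mem_erase hi⟩

theorem HasKTreeCompletion.of_subtype {S : Set ι} (h : HasKTreeCompletion k N fun i : S => B i)
    (hS : ∀ i ∉ S, ∃ j ∈ S, B i ⊆ B j) : HasKTreeCompletion k N B := by
  obtain ⟨H, hH, hcliques, hfresh⟩ := h
  refine ⟨H, hH, fun i => ?_, fun x hx hxN => ?_⟩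
  · by_cases hi : i ∈ S
    · exact hcliques ⟨i, hi⟩
    · obtain ⟨j, hj, hij⟩ := hS i hi
      exact (hcliques ⟨j, hj⟩).subset hij
  · obtain ⟨i, hi⟩ := hfresh x hx hxN
    exact ⟨i, hi⟩

end HasKTreeCompletion

theorem TreeDecomposition.hasKTreeCompletion {k : ℕ} {ι : Type} [Fintype ι]
    (D : TreeDecomposition ι) (hw : ∀ i, (D.bag i).card ≤ k + 1) (N : ℕ)
    (hN : ∀ i, ∀ x ∈ D.bag i, x < N) : HasKTreeCompletion k N D.bag := by
  classical
  by_cases hprivate : ∃ l v, v ∈ D.bag l ∧ ∀ i, v ∈ D.bag i → i = l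
  · obtain ⟨l, v, hvl, hv⟩ := hprivate
    have := (D.eraseVertex v).hasKTreeCompletion (fun i => Finset.card_erase_le.trans (hw i)) N
      fun i x hx => hN i x (Finset.mem_of_mem_erase hx)
    exact this.of_erase hvl hv (hw l) (hN l v hvl)
  push Not at hprivate
  cases subsingleton_or_nontrivial ι with
  | inl _ =>
    refine hasKTreeCompletion_of_forall_eq_empty fun i => Finset.eq_empty_of_forall_notMem ?_
    intro v hv
    obtain ⟨j, -, hji⟩ := hprivate i v hv
    exact hji (Subsingleton.elim j i)
  | inr _ =>
    obtain ⟨l, i₀, hadj, hleaf, hconn⟩ := D.isTree.exists_leaf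
    have hsub : D.bag l ⊆ D.bag i₀ := fun v hv => by
      obtain ⟨j, hj, hjl⟩ := hprivate l v hv
      exact D.mem_bag_of_leaf hleaf hv hj hjl
    refine ((D.restrict _ hconn).hasKTreeCompletion (fun i => hw i) N fun i => hN i).of_subtype ?_
    intro i hi
    rw [Set.mem_compl_singleton_iff, not_not] at hi
    exact ⟨i₀, hadj.ne.symm, hi ▸ hsub⟩
termination_by Fintype.card ι + ∑ i, (D.bag i).card
decreasing_by
  · have : ∑ i, ((D.eraseVertex v).bag i).card < ∑ i, (D.bag i).card :=
      Finset.sum_lt_sum (fun i _ => Finset.card_erase_le)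
        ⟨l, Finset.mem_univ _, Finset.card_erase_lt_of_mem hvl⟩
    omega
  · classical
    have hcard : Fintype.card ↑({l}ᶜ : Set ι) < Fintype.card ι :=
      Fintype.card_subtype_lt (p := (· ∈ ({l}ᶜ : Set ι))) (x := l) (by simp)
    have hsum : ∑ i : ↑({l}ᶜ : Set ι), (D.bag i).card ≤ ∑ i, (D.bag i).card := by
      rw [← Finset.sum_subtype (Finset.univ.erase l) (by simp) fun i => (D.bag i).card]
      exact Finset.sum_le_sum_of_subset (Finset.erase_subset l _)
    exact add_lt_add_of_lt_of_le hcard hsum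

theorem partial_ktree_iff_treewidth (k : ℕ) (G : FGraph) (hfin : G.verts.Finite) :
    IsPartialKTree k G ↔ HasTreewidthLE G k := by
  constructor
  · rintro ⟨H, hH, hGH⟩
    obtain ⟨ι, -, D, hD, hw, -⟩ := hH.exists_treeDecomposition
    exact (hD.mono hGH).hasTreewidthLE hw
  · intro h
    obtain ⟨ι, D, hD, hw, hverts⟩ := h.exists_treeDecomposition
    obtain ⟨S, hS, hDS⟩ := hD.exists_finset_restrict hfin
    obtain ⟨N, hN⟩ := hfin.bddAbove
    obtain ⟨H, hH, hcliques, -⟩ := (D.restrict S hS).hasKTreeCompletion (fun i => hw i) (N + 1)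
      fun i x hx => Nat.lt_succ_of_le (hN (hverts i hx))
    exact ⟨H, hH, hDS.le_of_isCliqueIn hcliques⟩
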